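/- arXiv:math/0612391 — 3 statements merged into one kernel-verified Lean document; each statement's English description precedes it below -/
import Mathlib

section
/- Let H be a finite connected simple graph which contains a triangle, let u be a vertex of H, and let M be a finite unicyclic simple graph with unique cycle C. Let r ≥ |V(H)| + 3 and let U be the set of vertices of M at distance exactly r from (the vertex set of) C. Then there is a graph homomorphism h from M to H such that h(w) = u for every w in U. -/
open SimpleGraph

/-- A finite simple graph is unicyclic: it contains exactly one cycle, where
cycles are identified up to starting vertex and direction (equivalently, by
their edge sets). -/
def GraphUnicyclic {V : Type} (G : SimpleGraph V) : Prop :=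
  (∃ (u : V) (c : G.Walk u u), c.IsCycle) ∧
  ∀ (u v : V) (c : G.Walk u u) (c' : G.Walk v v), c.IsCycle → c'.IsCycle →
    ∀ e, e ∈ c.edges ↔ e ∈ c'.edges

/-- A triangle in a graph: three pairwise adjacent vertices. -/
def HasTriangle {W : Type} (H : SimpleGraph W) : Prop :=
  ∃ a b c : W, H.Adj a b ∧ H.Adj b c ∧ H.Adj a c

/-- The vertex `w` is at distance exactly `r` from (the vertex set of) the
cycle `c`: there is a walk of length `r` from `w` to a vertex of `c`, and
every walk from `w` to a vertex of `c` has length at least `r`. -/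
def DistToCycleEq {V : Type} {M : SimpleGraph V} {x : V} (c : M.Walk x x)
    (w : V) (r : ℕ) : Prop :=
  (∃ y ∈ c.support, ∃ p : M.Walk w y, p.length = r) ∧
  (∀ y ∈ c.support, ∀ p : M.Walk w y, r ≤ p.length)

/-!
Deleting the edges of the unique cycle `C` leaves a forest `F`, and each component of `F` contains
at most one vertex of `C`: the first edge of an `F`-path between two cycle vertices would lie on a
second cycle. Root every component of `F`, at its cycle vertex when it has one. Map `C` onto the
triangle and send a vertex at `F`-distance `d` from the root `y` of its component to the `d`-th
term of an infinite walk that starts at the image of `y` and is at `u` at time `r`. Such a walk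
exists because a triangle vertex carries closed walks of every length `≥ 2`, while a path to `u`
has fewer than `|V(H)|` edges. In a forest the distances of adjacent vertices to a common root
differ by one, so this is a homomorphism; a shortest walk to `C` uses no cycle edge, so a vertex
at distance `r` from `C` is at `F`-distance `r` from its root.
-/

namespace SimpleGraph

section Triangle

variable {W : Type*} {H : SimpleGraph W} {z z₁ z₂ : W}

theorem exists_closed_walk_length_add_two_of_triangle (h₁ : H.Adj z z₁) (h₂ : H.Adj z₁ z₂)
    (h₃ : H.Adj z z₂) : ∀ m : ℕ, ∃ p : H.Walk z z, p.length = m + 2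
  | 0 => ⟨.cons h₁ (.cons h₁.symm .nil), rfl⟩
  | 1 => ⟨.cons h₁ (.cons h₂ (.cons h₃.symm .nil)), rfl⟩
  | m + 2 =>
    let ⟨p, hp⟩ := exists_closed_walk_length_add_two_of_triangle h₁ h₂ h₃ m
    ⟨.cons h₁ (.cons h₁.symm p), by simp [hp]⟩

theorem Connected.exists_walk_length_eq_of_triangle [Fintype W] (hconn : H.Connected)
    (h₁ : H.Adj z z₁) (h₂ : H.Adj z₁ z₂) (h₃ : H.Adj z z₂) (u : W) {m : ℕ}
    (hm : Fintype.card W + 1 ≤ m) : ∃ p : H.Walk z u, p.length = m := by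
  obtain ⟨q, hq, -⟩ := hconn.exists_path_of_dist z u
  have := hq.length_lt
  obtain ⟨p, hp⟩ := exists_closed_walk_length_add_two_of_triangle h₁ h₂ h₃ (m - q.length - 2)
  exact ⟨p.append q, by rw [Walk.length_append, hp]; omega⟩

theorem Walk.exists_adj_seq {u u' : W} (hu : H.Adj u u') (p : H.Walk z u) :
    ∃ s : ℕ → W, s 0 = z ∧ s p.length = u ∧ ∀ k, H.Adj (s k) (s (k + 1)) := by
  induction p with
  | @nil u =>
    refine ⟨fun k => if Even k then u else u', by simp, by simp, fun k => ?_⟩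
    by_cases hk : Even k <;> simp [hk, Nat.even_add_one, hu, hu.symm]
  | @cons z _ _ h p ih =>
    obtain ⟨s, hs0, hsp, hs⟩ := ih hu
    refine ⟨fun | 0 => z | k + 1 => s k, rfl, by simpa using hsp, fun k => ?_⟩
    cases k with
    | zero => simpa [hs0] using h
    | succ k => exact hs k

theorem Connected.exists_adj_seq_of_triangle [Fintype W] (hconn : H.Connected)
    (h₁ : H.Adj z z₁) (h₂ : H.Adj z₁ z₂) (h₃ : H.Adj z z₂) (u : W) {m : ℕ}
    (hm : Fintype.card W + 1 ≤ m) :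
    ∃ s : ℕ → W, s 0 = z ∧ s m = u ∧ ∀ k, H.Adj (s k) (s (k + 1)) := by
  obtain ⟨p, hp⟩ := hconn.exists_walk_length_eq_of_triangle h₁ h₂ h₃ u hm
  have hnil : ¬ p.Nil := by rw [← Walk.length_eq_zero_iff]; omega
  obtain ⟨s, hs0, hsp, hs⟩ := p.exists_adj_seq (p.adj_penultimate hnil).symm
  exact ⟨s, hs0, hp ▸ hsp, hs⟩

end Triangle

section Forest

variable {V W : Type*} {F : SimpleGraph V} {H : SimpleGraph W}

theorem exists_section_connectedComponentMk_fixing (S : Set V)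
    (hS : ∀ y₁ ∈ S, ∀ y₂ ∈ S, F.Reachable y₁ y₂ → y₁ = y₂) :
    ∃ root : F.ConnectedComponent → V, (∀ K, F.connectedComponentMk (root K) = K) ∧
      ∀ y ∈ S, root (F.connectedComponentMk y) = y := by
  classical
  refine ⟨fun K => if h : ∃ y ∈ S, F.connectedComponentMk y = K then h.choose
    else K.exists_rep.choose, fun K => ?_, fun y hy => ?_⟩
  · dsimp only
    split_ifs with h
    exacts [h.choose_spec.2, K.exists_rep.choose_spec]
  · have h : ∃ y' ∈ S, F.connectedComponentMk y' = F.connectedComponentMk y := ⟨y, hy, rfl⟩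
    dsimp only
    rw [dif_pos h]
    exact hS _ h.choose_spec.1 _ hy (ConnectedComponent.exact h.choose_spec.2)

noncomputable def levelMap (F : SimpleGraph V) (root : F.ConnectedComponent → V)
    (Q : V → ℕ → W) (v : V) : W :=
  Q (root (F.connectedComponentMk v)) (F.dist (root (F.connectedComponentMk v)) v)

theorem levelMap_eq_of_root_eq {root : F.ConnectedComponent → V} {Q : V → ℕ → W} {v y : V}
    (h : root (F.connectedComponentMk v) = y) : levelMap F root Q v = Q y (F.dist y v) := by
  rw [levelMap, h]

theorem IsAcyclic.adj_levelMap (hF : F.IsAcyclic) {root : F.ConnectedComponent → V}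
    (hroot : ∀ K, F.connectedComponentMk (root K) = K) {Q : V → ℕ → W}
    (hQ : ∀ y k, H.Adj (Q y k) (Q y (k + 1))) {v w : V} (hvw : F.Adj v w) :
    H.Adj (levelMap F root Q v) (levelMap F root Q w) := by
  have hK : F.connectedComponentMk w = F.connectedComponentMk v :=
    (ConnectedComponent.sound hvw.reachable).symm
  have hreach : F.Reachable (root (F.connectedComponentMk v)) v :=
    ConnectedComponent.exact (hroot _)
  rw [levelMap, levelMap, hK]
  rcases hF.dist_eq_dist_add_one_of_adj_of_reachable _ hvw hreach with h | h <;> rw [h]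
  exacts [(hQ _ _).symm, hQ _ _]

end Forest

end SimpleGraph

namespace GraphUnicyclic

variable {V : Type} {M : SimpleGraph V} {x : V} {c : M.Walk x x}

theorem isAcyclic_deleteEdges (huniq : GraphUnicyclic M) (hc : c.IsCycle) {e : Sym2 V}
    {s : Set (Sym2 V)} (he : e ∈ c.edges) (hs : e ∈ s) : (M.deleteEdges s).IsAcyclic := by
  intro y p hp
  have hep : e ∈ p.edges := by
    simpa using (huniq.2 _ _ _ _ (hp.mapLe (deleteEdges_le s)) hc e).mpr he
  have := p.edges_subset_edgeSet hep
  rw [edgeSet_deleteEdges] at this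
  exact this.2 hs

theorem isBridge (huniq : GraphUnicyclic M) (hc : c.IsCycle) {v w : V} (hvw : M.Adj v w)
    (he : s(v, w) ∉ c.edges) : M.IsBridge s(v, w) :=
  (isBridge_iff_forall_cycle_notMem hvw).mpr fun _ p hp hep =>
    he ((huniq.2 _ _ p c hp hc _).mp hep)

theorem eq_of_reachable_deleteEdges (huniq : GraphUnicyclic M) (hc : c.IsCycle) {y₁ y₂ : V}
    (hy₁ : y₁ ∈ c.support) (hy₂ : y₂ ∈ c.support)
    (h : (M.deleteEdges c.edgeSet).Reachable y₁ y₂) : y₁ = y₂ := by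
  classical
  obtain ⟨p, hp, -⟩ := h.exists_path_of_dist
  cases p with
  | nil => rfl
  | @cons _ z _ hadj q =>
    exfalso
    obtain ⟨hM, hnot⟩ := deleteEdges_adj.mp hadj
    obtain ⟨-, hy₁q⟩ := (Walk.cons_isPath_iff _ _).mp hp
    let arc : M.Walk y₁ y₂ := (c.takeUntil y₁ hy₁).reverse.append (c.takeUntil y₂ hy₂)
    have := isBridge_iff_forall_walk_mem_edges.mp (huniq.isBridge hc hM hnot)
      (arc.append (q.reverse.mapLe (deleteEdges_le _)))
    simp only [arc, Walk.edges_append, Walk.edges_reverse, List.mem_append, List.mem_reverse,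
      Walk.edges_mapLe_eq_edges] at this
    rcases this with (h | h) | h
    · exact hnot (c.edges_takeUntil_subset_edges hy₁ h)
    · exact hnot (c.edges_takeUntil_subset_edges hy₂ h)
    · exact hy₁q (q.fst_mem_support_of_mem_edges h)

theorem exists_map_triangle {W : Type*} {H : SimpleGraph W} (huniq : GraphUnicyclic M)
    (hc : c.IsCycle) {a b t : W} (hab : H.Adj a b) (hbt : H.Adj b t) (hat : H.Adj a t) :
    ∃ g : V → W, (∀ v, g v = a ∨ g v = b ∨ g v = t) ∧
      ∀ ⦃v w⦄, s(v, w) ∈ c.edges → H.Adj (g v) (g w) := by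
  classical
  cases c with
  | nil => exact absurd hc Walk.not_isCycle_nil
  | @cons _ x' _ hxx' p =>
    obtain ⟨-, he₀⟩ := (Walk.cons_isCycle_iff p hxx').mp hc
    set F := M.deleteEdges {s(x, x')}
    have hF : F.IsAcyclic := huniq.isAcyclic_deleteEdges hc (by simp) rfl
    have hreach : ∀ v ∈ p.support, F.Reachable x' v := fun v hv =>
      ⟨(p.takeUntil v hv).toDeleteEdges {s(x, x')} fun e he he₀' =>
        he₀ (Set.mem_singleton_iff.mp he₀' ▸ p.edges_takeUntil_subset_edges hv he)⟩
    -- `x` goes to the third corner; along the path `p`, which lies in the forest `F`, the colours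
    -- alternate with the parity of the distance from `x'`.
    refine ⟨fun v => if v = x then t else if Even (F.dist x' v) then a else b,
      fun v => by dsimp only; split_ifs <;> simp, fun v w hvw => ?_⟩
    have hne : v ≠ w := ((Walk.cons hxx' p).adj_of_mem_edges hvw).ne
    by_cases hv : v = x
    · subst hv
      simp only [if_true, if_neg hne.symm]
      split_ifs
      exacts [hat.symm, hbt.symm]
    by_cases hw : w = x
    · subst hw
      simp only [if_true, if_neg hne]
      split_ifs
      exacts [hat, hbt]
    have hvwp : s(v, w) ∈ p.edges := by
      simpa [Walk.edges_cons, hv, hw] using hvw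
    have hFvw : F.Adj v w := deleteEdges_adj.mpr ⟨p.adj_of_mem_edges hvwp, by simp [hv, hw]⟩
    simp only [if_neg hv, if_neg hw]
    have hba := hab.symm
    rcases hF.dist_eq_dist_add_one_of_adj_of_reachable x' hFvw
      (hreach v (p.fst_mem_support_of_mem_edges hvwp)) with h | h <;>
    · rw [h]
      split_ifs <;> simp_all [Nat.even_add_one]

end GraphUnicyclic

namespace DistToCycleEq

variable {V : Type} {M : SimpleGraph V} {x : V} {c : M.Walk x x}

theorem exists_reachable_dist_eq {w : V} {r : ℕ} (h : DistToCycleEq c w r) :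
    ∃ y ∈ c.support, (M.deleteEdges c.edgeSet).Reachable y w ∧
      (M.deleteEdges c.edgeSet).dist y w = r := by
  classical
  obtain ⟨⟨y, hy, p, hp⟩, hmin⟩ := h
  have hend : ∀ a ∈ p.support, a ∈ c.support → a = y := fun a ha hac => by
    by_contra hne
    have := hmin a hac (p.takeUntil a ha)
    have := p.length_takeUntil_lt_length ha hne
    omega
  have hoff : ∀ e ∈ p.edges, e ∉ c.edgeSet := by
    rintro ⟨a, b⟩ he hec
    refine (c.adj_of_mem_edges hec).ne ?_
    rw [hend a (p.fst_mem_support_of_mem_edges he) (c.fst_mem_support_of_mem_edges hec),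
      hend b (p.snd_mem_support_of_mem_edges he) (c.snd_mem_support_of_mem_edges hec)]
  let q := (p.toDeleteEdges c.edgeSet hoff).reverse
  refine ⟨y, hy, q.reachable, le_antisymm ?_ ?_⟩
  · simpa [q, hp] using dist_le q
  · obtain ⟨q', hq'⟩ := q.reachable.exists_walk_length_eq_dist
    simpa [hq'] using hmin y hy (q'.reverse.mapLe (deleteEdges_le _))

end DistToCycleEq

theorem stmt6_general {V W : Type} [Fintype W]
    (H : SimpleGraph W) (hconn : H.Connected) (htri : HasTriangle H) (u : W)
    (M : SimpleGraph V) (x : V) (c : M.Walk x x) (hc : c.IsCycle)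
    (huniq : GraphUnicyclic M)
    (r : ℕ) (hr : Fintype.card W + 3 ≤ r) :
    ∃ h : M →g H, ∀ w : V, DistToCycleEq c w r → h w = u := by
  obtain ⟨a, b, t, hab, hbt, hat⟩ := htri
  obtain ⟨g, hg_tri, hg_adj⟩ := huniq.exists_map_triangle hc hab hbt hat
  have hseq : ∀ v, ∃ s : ℕ → W, s 0 = g v ∧ s r = u ∧ ∀ k, H.Adj (s k) (s (k + 1)) := by
    intro v
    have hr' : Fintype.card W + 1 ≤ r := by omega
    rcases hg_tri v with h | h | h <;> rw [h]
    exacts [hconn.exists_adj_seq_of_triangle hab hbt hat u hr',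
      hconn.exists_adj_seq_of_triangle hab.symm hat hbt u hr',
      hconn.exists_adj_seq_of_triangle hat.symm hab hbt.symm u hr']
  choose Q hQ0 hQr hQ using hseq
  set F := M.deleteEdges c.edgeSet
  have hF : F.IsAcyclic := huniq.isAcyclic_deleteEdges hc
    (c.mk_start_snd_mem_edges hc.not_nil) (c.mk_start_snd_mem_edges hc.not_nil)
  obtain ⟨root, hroot, hroot_cycle⟩ := exists_section_connectedComponentMk_fixing
    {y | y ∈ c.support} fun _ hy₁ _ hy₂ => huniq.eq_of_reachable_deleteEdges hc hy₁ hy₂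
  refine ⟨⟨levelMap F root Q, fun {v w} hvw => ?_⟩, fun w hw => ?_⟩
  · by_cases he : s(v, w) ∈ c.edges
    · rw [levelMap_eq_of_root_eq (hroot_cycle v (c.fst_mem_support_of_mem_edges he)),
        levelMap_eq_of_root_eq (hroot_cycle w (c.snd_mem_support_of_mem_edges he)),
        dist_self, dist_self, hQ0, hQ0]
      exact hg_adj he
    · exact hF.adj_levelMap hroot hQ (deleteEdges_adj.mpr ⟨hvw, he⟩)
  · obtain ⟨y, hy, hreach, hdist⟩ := hw.exists_reachable_dist_eq
    have hroot_w : root (F.connectedComponentMk w) = y := by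
      rw [← ConnectedComponent.sound hreach, hroot_cycle y hy]
    show levelMap F root Q w = u
    rw [levelMap_eq_of_root_eq hroot_w, hdist, hQr]

/-- Let `H` be a finite connected simple graph containing a triangle, `u` a
vertex of `H`, and `M` a finite unicyclic simple graph with unique cycle `c`.
If `r ≥ |V(H)| + 3`, then there is a homomorphism `h : M → H` mapping every
vertex at distance exactly `r` from the cycle `c` to `u`. -/
theorem stmt6 {V W : Type} [Fintype V] [Fintype W]
    (H : SimpleGraph W) (hconn : H.Connected) (htri : HasTriangle H) (u : W)
    (M : SimpleGraph V) (x : V) (c : M.Walk x x) (hc : c.IsCycle)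
    (huniq : GraphUnicyclic M)
    (r : ℕ) (hr : Fintype.card W + 3 ≤ r) :
    ∃ h : M →g H, ∀ w : V, DistToCycleEq c w r → h w = u :=
  stmt6_general H hconn htri u M x c hc huniq r hr
end

section
/- Fix integers k ≥ 2, t ≥ 1, a constant c > 0, and ε > 0, and let p = p(n) ≤ c·n^{1−k}. Let G be the binomial random k-uniform hypergraph G^k(n,p) and let T be a uniformly random t-element subset of the vertices, chosen independently of G. Then for every integer r > 0 there exists an integer L = L(c,t,r,ε) such that, for all sufficiently large n, with probability at least 1 − ε all of the following hold: (i) no hyperedge of G contains more than one vertex of T; (ii) the sub-hypergraph of G induced on the set of vertices at distance at most r from T contains no cycle; (iii) at most L vertices are at distance at most r from T. -/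
open Filter
open scoped Classical

noncomputable section

/-- A `k`-uniform hypergraph on vertex type `V`: a finite set of hyperedges,
each a multiset of `k` vertices (repeated vertices allowed). -/
structure UniformHypergraph (k : ℕ) (V : Type) where
  edges : Finset (Multiset V)
  card_eq : ∀ e ∈ edges, Multiset.card e = k

/-- A cycle of size `r` in a hypergraph: pairwise distinct hyperedges
`e 0, …, e (r-1)`, pairwise distinct vertices `v 0, …, v (r-1)` with
`v r = v 0`, each `e i` containing both `v i` and `v (i+1)`. -/
def UniformHypergraph.IsCycle {k : ℕ} {V : Type} (G : UniformHypergraph k V)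
    (r : ℕ) (v : Fin (r + 1) → V) (e : Fin r → Multiset V) : Prop :=
  2 ≤ r ∧ (∀ i, e i ∈ G.edges) ∧ Function.Injective e ∧
  (∀ i j : Fin r, v i.castSucc = v j.castSucc → i = j) ∧
  v (Fin.last r) = v 0 ∧
  ∀ i : Fin r, v i.castSucc ∈ e i ∧ v i.succ ∈ e i

/-- Truncation of a real number to `[0,1]`, so that it is a probability. -/
def clamp01 (p : ℝ) : ℝ := max 0 (min 1 p)

/-- The potential hyperedges of `G^k(n,p)`: `k`-element subsets of `Fin n`. -/
abbrev HyperSlot (n k : ℕ) := {s : Finset (Fin n) // s.card = k}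

/-- The `k`-uniform hypergraph on `Fin n` determined by an indicator function
on the potential hyperedges. -/
def hyperOf (n k : ℕ) (f : HyperSlot n k → Bool) : UniformHypergraph k (Fin n) where
  edges := (Finset.univ.filter fun s : HyperSlot n k => f s = true).image
      fun s : HyperSlot n k => (s.val.val : Multiset (Fin n))
  card_eq := by
    intro e he
    simp only [Finset.mem_image, Finset.mem_filter] at he
    obtain ⟨s, -, rfl⟩ := he
    exact s.2

/-- `distLE E A m v` holds iff in the hypergraph with hyperedge set `E` the
vertex `v` is at distance at most `m` (in the walk metric) from the vertex
set `A`. -/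
def distLE {n : ℕ} (E : Finset (Multiset (Fin n))) (A : Finset (Fin n)) :
    ℕ → Fin n → Prop
  | 0, v => v ∈ A
  | m + 1, v => distLE E A m v ∨ ∃ e ∈ E, v ∈ e ∧ ∃ u ∈ e, distLE E A m u

/-- The event of the local structure lemma, for the random hypergraph given
by the edge indicator `f` and the random `t`-set `T`:
(i) no hyperedge contains more than one vertex of `T`;
(ii) the sub-hypergraph induced on the vertices at distance at most `r` from
`T` contains no cycle;
(iii) at most `L` vertices are at distance at most `r` from `T`. -/
def LocalGood (k t n r L : ℕ) (f : HyperSlot n k → Bool)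
    (T : {T : Finset (Fin n) // T.card = t}) : Prop :=
  (∀ s : HyperSlot n k, f s = true → (s.val ∩ T.val).card ≤ 1) ∧
  (¬ ∃ (m : ℕ) (v : Fin (m + 1) → Fin n) (e : Fin m → Multiset (Fin n)),
      (hyperOf n k f).IsCycle m v e ∧
      ∀ (i : Fin m), ∀ u ∈ e i, distLE (hyperOf n k f).edges T.val r u) ∧
  ((Finset.univ.filter fun v : Fin n =>
      distLE (hyperOf n k f).edges T.val r v).card ≤ L)

/-- The probability that the event of the local structure lemma holds, where
the hypergraph is `G^k(n,p)` and `T` is a uniformly random `t`-element vertex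
subset chosen independently of it. -/
def localProb (k t n : ℕ) (p : ℝ) (r L : ℕ) : ℝ :=
  ∑ f : HyperSlot n k → Bool, ∑ T : {T : Finset (Fin n) // T.card = t},
    (∏ s : HyperSlot n k, if f s then clamp01 p else 1 - clamp01 p) *
      ((n.choose t : ℝ))⁻¹ * (if LocalGood k t n r L f T then 1 else 0)

/-!
Every bad event is bounded by a first-moment count of explicit certificates, with
`λ = k n^(k-1) p ≤ k c`. A vertex at distance `1 ≤ d ≤ r` from `T` ends a shortest walk from `T`;
its slots are distinct, there are at most `t (k n^(k-1))^d` candidates, each present with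
probability `p^d`, so the ball has expected size at most `t + r t λ^r` and Markov's inequality
bounds it by a constant `L` with probability `1 - ε/2`.

If the ball carries a cycle and has at most `L` vertices, a shortest walk from `T` to the cycle
followed once around it is a walk of length at most `r + L` through distinct slots whose last slot
contains two vertices fixed by the earlier steps. There are only `k n^(k-2)` choices for that slot
instead of `k n^(k-1)`, so the expected number of such walks is `O(1/n)`; likewise a hyperedge
meeting `T` twice has probability `O(t² n^(k-2) p) = O(1/n)`.
-/

theorem UniformHypergraph.IsCycle.mem_succ {k : ℕ} {V : Type} {G : UniformHypergraph k V} {m : ℕ}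
    {v : Fin (m + 3) → V} {e : Fin (m + 2) → Multiset V} (h : G.IsCycle (m + 2) v e)
    (i : Fin (m + 2)) : v (i + 1).castSucc ∈ e i := by
  by_cases hi : i = Fin.last (m + 1)
  · subst hi
    simpa [h.2.2.2.2.1] using (h.2.2.2.2.2 (Fin.last (m + 1))).2
  · have : (i + 1).castSucc = i.succ := Fin.ext (by simp [Fin.val_add_one, hi])
    simpa [this] using (h.2.2.2.2.2 i).2

namespace RandomHypergraph

open Finset Function

def ind (P : Prop) : ℝ := if P then 1 else 0

lemma ind_nonneg (P : Prop) : 0 ≤ ind P := by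
  unfold ind; split_ifs <;> norm_num

lemma ind_of {P : Prop} (h : P) : ind P = 1 := if_pos h

lemma ind_of_not {P : Prop} (h : ¬P) : ind P = 0 := if_neg h

lemma ind_mono {P Q : Prop} (h : P → Q) : ind P ≤ ind Q := by
  by_cases hP : P
  · rw [ind_of hP, ind_of (h hP)]
  · rw [ind_of_not hP]; exact ind_nonneg Q

lemma ind_not (P : Prop) : ind (¬P) = 1 - ind P := by
  by_cases hP : P
  · rw [ind_of_not (not_not_intro hP), ind_of hP]; ring
  · rw [ind_of hP, ind_of_not hP]; ring

lemma ind_or_le (P Q : Prop) : ind (P ∨ Q) ≤ ind P + ind Q := by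
  by_cases hP : P
  · rw [ind_of (Or.inl hP), ind_of hP]; linarith [ind_nonneg Q]
  · rw [ind_of_not hP, zero_add]; exact ind_mono (Or.resolve_left · hP)

lemma ind_exists_le_sum {ι : Type*} (S : Finset ι) (P : ι → Prop) :
    ind (∃ i ∈ S, P i) ≤ ∑ i ∈ S, ind (P i) := by
  by_cases h : ∃ i ∈ S, P i
  · obtain ⟨i, hi, hP⟩ := h
    rw [ind_of ⟨i, hi, hP⟩, ← ind_of hP]
    exact single_le_sum (fun j _ => ind_nonneg (P j)) hi
  · rw [ind_of_not h]
    exact sum_nonneg fun i _ => ind_nonneg (P i)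

section Bernoulli

variable {α : Type*} [Fintype α] (q : ℝ)

def bernoulliWeight (f : α → Bool) : ℝ := ∏ a, if f a then q else 1 - q

def expect (X : (α → Bool) → ℝ) : ℝ := ∑ f, bernoulliWeight q f * X f

variable {q}

lemma bernoulliWeight_nonneg (hq0 : 0 ≤ q) (hq1 : q ≤ 1) (f : α → Bool) :
    0 ≤ bernoulliWeight q f :=
  prod_nonneg fun a _ => by split <;> linarith

lemma expect_mono (hq0 : 0 ≤ q) (hq1 : q ≤ 1) {X Y : (α → Bool) → ℝ} (h : ∀ f, X f ≤ Y f) :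
    expect q X ≤ expect q Y :=
  sum_le_sum fun f _ => mul_le_mul_of_nonneg_left (h f) (bernoulliWeight_nonneg hq0 hq1 f)

lemma expect_add (X Y : (α → Bool) → ℝ) :
    expect q (fun f => X f + Y f) = expect q X + expect q Y := by
  simp only [expect, mul_add, sum_add_distrib]

lemma expect_const_mul (c : ℝ) (X : (α → Bool) → ℝ) :
    expect q (fun f => c * X f) = c * expect q X := by
  simp only [expect, mul_sum]
  exact sum_congr rfl fun f _ => by ring

lemma expect_sum {ι : Type*} (S : Finset ι) (X : ι → (α → Bool) → ℝ) :
    expect q (fun f => ∑ i ∈ S, X i f) = ∑ i ∈ S, expect q (X i) := by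
  simp only [expect, mul_sum]; exact sum_comm

lemma expect_ind_forall_mem (E : Finset α) :
    expect q (fun f => ind (∀ a ∈ E, f a = true)) = q ^ #E := by
  have factor : ∀ f : α → Bool, bernoulliWeight q f * ind (∀ a ∈ E, f a = true) =
      ∏ a, (if f a then q else 1 - q) * (if a ∈ E then (if f a then 1 else 0) else 1) := by
    intro f
    by_cases h : ∀ a ∈ E, f a = true
    · rw [ind_of h, mul_one, bernoulliWeight]
      refine prod_congr rfl fun a _ => ?_
      by_cases ha : a ∈ E <;> simp [ha, h]
    · obtain ⟨a, ha, hfa⟩ := not_forall₂.1 h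
      rw [ind_of_not h, mul_zero, eq_comm]
      exact prod_eq_zero (mem_univ a) (by simp [ha, hfa])
  classical
  simp only [expect, factor]
  rw [← Fintype.prod_sum (fun (a : α) (b : Bool) =>
    (if b then q else 1 - q) * (if a ∈ E then (if b then 1 else 0) else 1))]
  have hfactor : ∀ a : α, ∑ b : Bool, (if b then q else 1 - q) *
      (if a ∈ E then (if b then 1 else 0) else 1) = if a ∈ E then q else 1 := by
    intro a; by_cases ha : a ∈ E <;> simp [ha]
  simp only [hfactor, prod_ite_mem, univ_inter, prod_const]

lemma expect_one : expect q (fun (_ : α → Bool) => 1) = 1 := by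
  simpa [ind] using expect_ind_forall_mem (q := q) (∅ : Finset α)

lemma expect_ind_not (P : (α → Bool) → Prop) :
    expect q (fun f => ind (¬P f)) = 1 - expect q (fun f => ind (P f)) := by
  simp only [expect, ind_not, mul_sub, sum_sub_distrib]
  congr 1
  exact expect_one

lemma expect_card_filter_forall {ι : Type*} (S : Finset ι) (E : ι → Finset α)
    [∀ f : α → Bool, DecidablePred fun i => ∀ a ∈ E i, f a = true] :
    expect q (fun f => (#{i ∈ S | ∀ a ∈ E i, f a = true} : ℝ)) = ∑ i ∈ S, q ^ #(E i) := by
  simp only [← expect_ind_forall_mem, ← expect_sum]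
  congr 1
  ext f
  simp only [ind]
  convert (sum_boole (R := ℝ) (fun i => ∀ a ∈ E i, f a = true) S).symm

lemma expect_ind_exists_le (hq0 : 0 ≤ q) (hq1 : q ≤ 1) {ι : Type*} (S : Finset ι)
    (E : ι → Finset α) :
    expect q (fun f => ind (∃ i ∈ S, ∀ a ∈ E i, f a = true)) ≤ ∑ i ∈ S, q ^ #(E i) := by
  simp only [← expect_ind_forall_mem, ← expect_sum]
  exact expect_mono hq0 hq1 fun f => ind_exists_le_sum S _

end Bernoulli

section Tuples

variable {β : Type*}

lemma card_le_of_init [Fintype β] [DecidableEq β] {l d : ℕ} (s : Finset (Fin (l + 1) → β))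
    (Q : (Fin l → β) → Prop) (S : (Fin l → β) → β → Prop) [∀ p, DecidablePred (S p)]
    (hS : ∀ p, #{x | S p x} ≤ d)
    (hs : ∀ c ∈ s, Q (Fin.init c) ∧ S (Fin.init c) (c (Fin.last l))) :
    #s ≤ #{p | Q p} * d := by
  calc #s
      ≤ #(({p | Q p} : Finset _).biUnion fun p =>
          ({x | S p x} : Finset β).image (Fin.snoc (α := fun _ => β) p)) := by
        refine card_le_card fun c hc => ?_
        simp only [mem_biUnion, mem_filter, mem_univ, true_and, mem_image]
        exact ⟨Fin.init c, (hs c hc).1, c (Fin.last l), (hs c hc).2, Fin.snoc_init_self c⟩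
    _ ≤ ∑ p ∈ {p | Q p}, #(({x | S p x} : Finset β).image (Fin.snoc (α := fun _ => β) p)) :=
        card_biUnion_le
    _ ≤ ∑ _p ∈ {p | Q p}, d := sum_le_sum fun p _ => card_image_le.trans (hS p)
    _ = #{p | Q p} * d := by rw [sum_const, smul_eq_mul]

def IsChainFrom (P : β → Prop) (R : β → β → Prop) {l : ℕ} (c : Fin (l + 1) → β) : Prop :=
  P (c 0) ∧ ∀ i : Fin l, R (c i.castSucc) (c i.succ)

lemma IsChainFrom.init {P : β → Prop} {R : β → β → Prop} {l : ℕ} {c : Fin (l + 2) → β}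
    (h : IsChainFrom P R c) :
    IsChainFrom P R (Fin.init c) ∧ R (Fin.init c (Fin.last l)) (c (Fin.last (l + 1))) :=
  ⟨⟨h.1, fun i => by
    show R (c i.castSucc.castSucc) (c i.succ.castSucc)
    rw [← Fin.succ_castSucc]
    exact h.2 i.castSucc⟩, h.2 (Fin.last l)⟩

lemma card_isChainFrom_le [Fintype β] [DecidableEq β] (P : β → Prop) (R : β → β → Prop)
    [DecidablePred P] [∀ b, DecidablePred (R b)] {a d : ℕ} (hP : #{b | P b} ≤ a)
    (hR : ∀ b, #{b' | R b b'} ≤ d) (l : ℕ) :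
    #{c : Fin (l + 1) → β | IsChainFrom P R c} ≤ a * d ^ l := by
  induction l with
  | zero =>
    refine (card_le_of_init _ (fun _ => True) (fun _ => P) (fun _ => hP)
      fun c hc => ⟨trivial, (mem_filter.1 hc).2.1⟩).trans ?_
    simp
  | succ l ih =>
    calc #{c : Fin (l + 2) → β | IsChainFrom P R c}
        ≤ #{p | IsChainFrom P R p} * d :=
          card_le_of_init _ _ (fun p => R (p (Fin.last l))) (fun p => hR _)
            fun c hc => (mem_filter.1 hc).2.init
      _ ≤ a * d ^ l * d := Nat.mul_le_mul_right d ih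
      _ = a * d ^ (l + 1) := by ring

end Tuples

section Slots

variable {n k : ℕ}

lemma card_slot_superset_le (P : Finset (Fin n)) :
    #{s : HyperSlot n k | P ⊆ s.val} ≤ n ^ (k - #P) := by
  calc #{s : HyperSlot n k | P ⊆ s.val}
      ≤ #(powersetCard (k - #P) (univ : Finset (Fin n))) := by
        refine card_le_card_of_injOn (fun s => s.val \ P) (fun s hs => ?_) fun s hs s' hs' h => ?_
        · simp only [coe_filter, Set.mem_ofPred_eq, mem_univ, true_and] at hs
          simp [card_sdiff_of_subset hs, s.2]
        · simp only [coe_filter, Set.mem_ofPred_eq, mem_univ, true_and] at hs hs'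
          apply Subtype.ext
          simpa [sdiff_union_of_subset hs, sdiff_union_of_subset hs'] using
            congrArg (· ∪ P) h
    _ ≤ n ^ (k - #P) := by
        simpa only [card_powersetCard, card_univ, Fintype.card_fin] using Nat.choose_le_pow _ _

lemma card_slot_mem_le (x : Fin n) : #{s : HyperSlot n k | x ∈ s.val} ≤ n ^ (k - 1) := by
  simpa using card_slot_superset_le (k := k) {x}

lemma card_slot_mem_mem_le {x y : Fin n} (hxy : x ≠ y) :
    #{s : HyperSlot n k | x ∈ s.val ∧ y ∈ s.val} ≤ n ^ (k - 2) := by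
  simpa [card_pair hxy, insert_subset_iff] using card_slot_superset_le (k := k) {x, y}

lemma card_slot_meet_le (A : Finset (Fin n)) :
    #{s : HyperSlot n k | ∃ x ∈ A, x ∈ s.val} ≤ #A * n ^ (k - 1) := by
  calc #{s : HyperSlot n k | ∃ x ∈ A, x ∈ s.val}
      ≤ #(A.biUnion fun x => {s : HyperSlot n k | x ∈ s.val}) :=
        card_le_card fun s hs => by simpa using hs
    _ ≤ ∑ x ∈ A, #{s : HyperSlot n k | x ∈ s.val} := card_biUnion_le
    _ ≤ ∑ _x ∈ A, n ^ (k - 1) := sum_le_sum fun x _ => card_slot_mem_le x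
    _ = #A * n ^ (k - 1) := by rw [sum_const, smul_eq_mul]

lemma card_slot_two_le (A : Finset (Fin n)) :
    #{s : HyperSlot n k | ∃ x ∈ A, ∃ y ∈ A, x ≠ y ∧ x ∈ s.val ∧ y ∈ s.val} ≤
      #A ^ 2 * n ^ (k - 2) := by
  calc #{s : HyperSlot n k | ∃ x ∈ A, ∃ y ∈ A, x ≠ y ∧ x ∈ s.val ∧ y ∈ s.val}
      ≤ #((A ×ˢ A).biUnion fun xy =>
          {s : HyperSlot n k | xy.1 ≠ xy.2 ∧ xy.1 ∈ s.val ∧ xy.2 ∈ s.val}) :=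
        card_le_card fun s hs => by simpa using hs
    _ ≤ ∑ xy ∈ A ×ˢ A, #{s : HyperSlot n k | xy.1 ≠ xy.2 ∧ xy.1 ∈ s.val ∧ xy.2 ∈ s.val} :=
        card_biUnion_le
    _ ≤ ∑ _xy ∈ A ×ˢ A, n ^ (k - 2) := by
        refine sum_le_sum fun xy _ => ?_
        by_cases h : xy.1 = xy.2
        · simp [h]
        · simpa [h] using card_slot_mem_mem_le (k := k) h
    _ = #A ^ 2 * n ^ (k - 2) := by rw [sum_const, card_product, smul_eq_mul, sq]

lemma card_slot_vertex_le (Q : HyperSlot n k → Prop) [DecidablePred Q] :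
    #{b : HyperSlot n k × Fin n | Q b.1 ∧ b.2 ∈ b.1.val} ≤ #{s | Q s} * k := by
  calc #{b : HyperSlot n k × Fin n | Q b.1 ∧ b.2 ∈ b.1.val}
      ≤ #(({s | Q s} : Finset _).biUnion fun s => s.val.image fun x => (s, x)) :=
        card_le_card fun b hb => by
          simp only [mem_filter, mem_univ, true_and] at hb
          exact mem_biUnion.2 ⟨b.1, by simpa using hb.1, mem_image.2 ⟨b.2, hb.2, rfl⟩⟩
    _ ≤ ∑ s ∈ {s | Q s}, #(s.val.image fun x => (s, x)) := card_biUnion_le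
    _ ≤ ∑ _s ∈ ({s | Q s} : Finset (HyperSlot n k)), k :=
        sum_le_sum fun s _ => card_image_le.trans s.2.le
    _ = #{s | Q s} * k := by rw [sum_const, smul_eq_mul]

lemma card_slot_vertex_closing_le (x : Fin n) (Y : Finset (Fin n)) :
    #{b : HyperSlot n k × Fin n | (x ∈ b.1.val ∧ b.2 ∈ b.1.val) ∧ b.2 ≠ x ∧ b.2 ∈ Y} ≤
      #Y * n ^ (k - 2) := by
  calc #{b : HyperSlot n k × Fin n | (x ∈ b.1.val ∧ b.2 ∈ b.1.val) ∧ b.2 ≠ x ∧ b.2 ∈ Y}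
      ≤ #(Y.biUnion fun y =>
          ({s | y ≠ x ∧ x ∈ s.val ∧ y ∈ s.val} : Finset (HyperSlot n k)).image
            fun s => (s, y)) :=
        card_le_card fun b hb => by
          simp only [mem_filter, mem_univ, true_and] at hb
          refine mem_biUnion.2 ⟨b.2, hb.2.2, mem_image.2 ⟨b.1, ?_, rfl⟩⟩
          simpa using ⟨hb.2.1, hb.1⟩
    _ ≤ ∑ y ∈ Y, #(({s | y ≠ x ∧ x ∈ s.val ∧ y ∈ s.val} : Finset (HyperSlot n k)).image
          fun s => (s, y)) := card_biUnion_le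
    _ ≤ ∑ _y ∈ Y, n ^ (k - 2) := by
        refine sum_le_sum fun y _ => card_image_le.trans ?_
        by_cases h : y = x
        · simp [h]
        · simpa [h] using card_slot_mem_mem_le (k := k) (Ne.symm h)
    _ = #Y * n ^ (k - 2) := by rw [sum_const, smul_eq_mul]

end Slots

section Walks

variable {V ε : Type*} (inc : V → ε → Prop)

/-- Walks are encoded by `ℕ`-indexed vertex and edge sequences, of which only the vertices
`u 0, …, u j` and the edges `g 0, …, g (j - 1)` matter. -/
def IsWalk (A : Set V) (j : ℕ) (u : ℕ → V) (g : ℕ → ε) : Prop :=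
  u 0 ∈ A ∧ ∀ i < j, inc (u i) (g i) ∧ inc (u (i + 1)) (g i)

variable {inc} {A : Set V} {j : ℕ} {u : ℕ → V} {g : ℕ → ε}

lemma IsWalk.mono (h : IsWalk inc A j u g) {j' : ℕ} (hj : j' ≤ j) : IsWalk inc A j' u g :=
  ⟨h.1, fun i hi => h.2 i (hi.trans_le hj)⟩

lemma IsWalk.snoc (h : IsWalk inc A j u g) {e : ε} {x : V} (he : inc (u j) e)
    (hx : inc x e) :
    IsWalk inc A (j + 1) (fun i => if i ≤ j then u i else x)
      (fun i => if i < j then g i else e) := by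
  refine ⟨by simpa using h.1, fun i hi => ?_⟩
  rcases Nat.lt_or_ge i j with hij | hij
  · simpa [hij.le, hij, Nat.succ_le_of_lt hij] using h.2 i hij
  · obtain rfl : i = j := by omega
    simpa using ⟨he, hx⟩

/-- Cutting out the closed stretch between two uses `a < b` of the same edge. -/
lemma IsWalk.shortcut (h : IsWalk inc A j u g) {a b : ℕ} (hab : a < b) (hb : b < j)
    (hg : g a = g b) :
    IsWalk inc A (j - (b - a)) (fun i => if i ≤ a then u i else u (i + (b - a)))
      (fun i => if i ≤ a then g i else g (i + (b - a))) := by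
  refine ⟨by simpa using h.1, fun i hi => ?_⟩
  rcases lt_trichotomy i a with hia | rfl | hia
  · simpa [hia.le, Nat.succ_le_of_lt hia] using h.2 i (by omega)
  · have hb' : i + 1 + (b - i) = b + 1 := by omega
    simp only [le_refl, if_true, if_neg (show ¬ i + 1 ≤ i by omega), hb']
    exact ⟨(h.2 i (by omega)).1, hg ▸ (h.2 b hb).2⟩
  · have hi' : i + 1 + (b - a) = i + (b - a) + 1 := by omega
    simp only [if_neg hia.not_ge, if_neg (show ¬ i + 1 ≤ a by omega), hi']
    exact h.2 (i + (b - a)) (by omega)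

lemma exists_isWalk_shortest {C : Set V} {r : ℕ}
    (h : ∃ j ≤ r, ∃ u g, IsWalk inc A j u g ∧ u j ∈ C) :
    ∃ j ≤ r, ∃ u g, IsWalk inc A j u g ∧ u j ∈ C ∧ (∀ i < j, u i ∉ C) ∧
      Set.InjOn g (Set.Iio j) := by
  classical
  have hex : ∃ j u g, IsWalk inc A j u g ∧ u j ∈ C :=
    let ⟨j, _, u, g, hw⟩ := h
    ⟨j, u, g, hw⟩
  obtain ⟨u, g, hw, hC⟩ := Nat.find_spec hex
  set j := Nat.find hex
  have hmin : ∀ j' < j, ¬ ∃ u g, IsWalk inc A j' u g ∧ u j' ∈ C := fun _ => Nat.find_min hex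
  have hjr : j ≤ r := by
    obtain ⟨j₀, hj₀, hw₀⟩ := h
    exact (Nat.find_min' hex hw₀).trans hj₀
  have hshort : ∀ a b, a < b → b < j → g a ≠ g b := by
    intro a b hab hb hg
    refine hmin (j - (b - a)) (by omega) ⟨_, _, hw.shortcut hab hb hg, ?_⟩
    simp only [if_neg (show ¬ j - (b - a) ≤ a by omega),
      Nat.sub_add_cancel (show b - a ≤ j by omega)]
    exact hC
  refine ⟨j, hjr, u, g, hw, hC, fun i hi hui => hmin i hi ⟨u, g, hw.mono hi.le, hui⟩, ?_⟩
  intro a ha b hb hg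
  by_contra hne
  rcases lt_or_gt_of_ne hne with hab | hab
  · exact hshort a b hab hb hg
  · exact hshort b a hab ha hg.symm

open Fin.NatCast in
/-- Continuing a walk, after its end `u j` on the edge `e a` of a cycle `x, e`, around the cycle. -/
lemma IsWalk.append_cycle (h : IsWalk inc A j u g) {m : ℕ} {x : Fin (m + 2) → V}
    {e : Fin (m + 2) → ε} (hinc : ∀ i, inc (x i) (e i) ∧ inc (x (i + 1)) (e i)) {a : Fin (m + 2)}
    (ha : inc (u j) (e a)) (N : ℕ) :
    IsWalk inc A N (fun i => if i ≤ j then u i else x (a + ((i - j : ℕ) : Fin (m + 2))))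
      (fun i => if i < j then g i else e (a + ((i - j : ℕ) : Fin (m + 2)))) := by
  refine ⟨by simpa using h.1, fun i hi => ?_⟩
  rcases Nat.lt_or_ge i j with hij | hij
  · simpa [hij.le, hij, Nat.succ_le_of_lt hij] using h.2 i hij
  · have hnext : a + ((i + 1 - j : ℕ) : Fin (m + 2)) = a + ((i - j : ℕ) : Fin (m + 2)) + 1 := by
      rw [Nat.sub_add_comm hij, Nat.cast_succ, add_assoc]
    simp only [if_neg hij.not_gt, if_neg (show ¬ i + 1 ≤ j by omega), hnext]
    refine ⟨?_, (hinc _).2⟩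
    split_ifs with hij'
    · obtain rfl : i = j := le_antisymm hij' hij
      simpa using ha
    · exact (hinc _).1

open Fin.NatCast in
/-- A walk from `A` that reaches a cycle `x, e` within `r` steps can be continued once around the
cycle, entering it through the first cycle edge it meets. The result uses distinct edges, and its
last vertex differs from the previous one but lies on the edge taken after `j ≤ r` steps. -/
lemma exists_isWalk_around_cycle {r m : ℕ} {x : Fin (m + 2) → V} {e : Fin (m + 2) → ε}
    (hx : Injective x) (he : Injective e) (hinc : ∀ i, inc (x i) (e i) ∧ inc (x (i + 1)) (e i))
    (hreach : ∃ j ≤ r, ∃ u g, IsWalk inc A j u g ∧ u j = x 0) :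
    ∃ j ≤ r, ∃ u g, IsWalk inc A (j + m + 2) u g ∧ Set.InjOn g (Set.Iio (j + m + 2)) ∧
      u (j + m + 2) ≠ u (j + m + 1) ∧ inc (u (j + m + 2)) (g j) := by
  obtain ⟨j, hjr, u, g, hw, ⟨a, ha⟩, hout, hinj⟩ :=
    exists_isWalk_shortest (C := {y | ∃ i, inc y (e i)}) (by
      obtain ⟨j, hj, u, g, hw, hu⟩ := hreach
      exact ⟨j, hj, u, g, hw, 0, hu ▸ (hinc 0).1⟩)
  have hcast : ∀ l l', l < m + 2 → l' < m + 2 →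
      a + (l : Fin (m + 2)) = a + (l' : Fin (m + 2)) → l = l' := by
    intro l l' hl hl' h
    simpa [Fin.ext_iff, Fin.val_natCast, Nat.mod_eq_of_lt hl, Nat.mod_eq_of_lt hl'] using h
  refine ⟨j, hjr, _, _, hw.append_cycle hinc ha _, fun i hi i' hi' hg => ?_, ?_, ?_⟩
  · simp only [Set.mem_Iio] at hi hi'
    simp only at hg
    split_ifs at hg with h h' h'
    · exact hinj h h' hg
    · exact absurd ⟨_, hg ▸ (hw.2 i h).1⟩ (hout i h)
    · exact absurd ⟨_, hg.symm ▸ (hw.2 i' h').1⟩ (hout i' h')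
    · have := hcast _ _ (by omega) (by omega) (he hg)
      omega
  · simp only [if_neg (show ¬ j + m + 2 ≤ j by omega), if_neg (show ¬ j + m + 1 ≤ j by omega),
      show j + m + 2 - j = m + 2 by omega, show j + m + 1 - j = m + 1 by omega,
      Fin.natCast_self, add_zero]
    intro hxa
    have := hcast 0 (m + 1) (by omega) (by omega) (by simpa using hx hxa)
    omega
  · simpa [if_neg (show ¬ j + m + 2 ≤ j by omega), show j + m + 2 - j = m + 2 by omega] using
      (hinc a).1

end Walks

section Hypergraph

variable {n k : ℕ}

def EdgeInc {V : Type*} (E : Finset (Multiset V)) (x : V) (e : Multiset V) : Prop :=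
  e ∈ E ∧ x ∈ e

lemma exists_isWalk_of_distLE {E : Finset (Multiset (Fin n))} {A : Finset (Fin n)} {m : ℕ}
    {v : Fin n} (h : distLE E A m v) : ∃ j ≤ m, ∃ u g, IsWalk (EdgeInc E) A j u g ∧ u j = v := by
  induction m generalizing v with
  | zero => exact ⟨0, le_rfl, fun _ => v, fun _ => 0, ⟨h, fun i hi => absurd hi i.not_lt_zero⟩, rfl⟩
  | succ m ih =>
    rcases h with h | ⟨e, he, hve, w, hwe, hw⟩
    · obtain ⟨j, hj, u, g, hwalk, hu⟩ := ih h
      exact ⟨j, by omega, u, g, hwalk, hu⟩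
    · obtain ⟨j, hj, u, g, hwalk, rfl⟩ := ih hw
      exact ⟨j + 1, by omega, _, _, hwalk.snoc ⟨he, hwe⟩ ⟨he, hve⟩, by simp⟩

end Hypergraph

section Certificates

variable {n k : ℕ}

/-- `b' = (s, x)` continues a walk whose previous step left through the vertex `b.2`: the walk
enters the slot `s` at `b.2` and leaves it at `x`. -/
def WalkStep (b b' : HyperSlot n k × Fin n) : Prop := b.2 ∈ b'.1.val ∧ b'.2 ∈ b'.1.val

def StartsIn (T : Finset (Fin n)) (b : HyperSlot n k × Fin n) : Prop :=
  (∃ x ∈ T, x ∈ b.1.val) ∧ b.2 ∈ b.1.val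

def walkCerts (T : Finset (Fin n)) (l : ℕ) : Finset (Fin (l + 1) → HyperSlot n k × Fin n) :=
  {c | IsChainFrom (StartsIn T) WalkStep c ∧ Injective fun i => (c i).1}

/-- Walks closing a cycle: the last vertex differs from the previous one but lies on the slot
used at step `j`. Two prescribed vertices leave only `k n^(k-2)` choices for the last slot, which
is where the factor `1/n` in the probability of a cycle comes from. -/
def cycleCerts (T : Finset (Fin n)) (l : ℕ) (j : Fin (l + 1)) :
    Finset (Fin (l + 2) → HyperSlot n k × Fin n) :=
  {c | c ∈ walkCerts T (l + 1) ∧ (c (Fin.last _)).2 ≠ (c (Fin.last l).castSucc).2 ∧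
    (c (Fin.last _)).2 ∈ (c j.castSucc).1.val}

def slotsOf {l : ℕ} (c : Fin l → HyperSlot n k × Fin n) : Finset (HyperSlot n k) :=
  univ.image fun i => (c i).1

lemma card_slotsOf {l : ℕ} {c : Fin l → HyperSlot n k × Fin n} (hc : Injective fun i => (c i).1) :
    #(slotsOf c) = l := by
  rw [slotsOf, card_image_of_injective _ hc, card_univ, Fintype.card_fin]

lemma card_isChainFrom_walkStep_le (T : Finset (Fin n)) (l : ℕ) :
    #{c : Fin (l + 1) → HyperSlot n k × Fin n | IsChainFrom (StartsIn T) WalkStep c} ≤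
      #T * (n ^ (k - 1) * k) ^ (l + 1) := by
  have hstart : #{b : HyperSlot n k × Fin n | StartsIn T b} ≤ #T * n ^ (k - 1) * k :=
    calc #{b : HyperSlot n k × Fin n | StartsIn T b}
        ≤ #{b : HyperSlot n k × Fin n | (∃ x ∈ T, x ∈ b.1.val) ∧ b.2 ∈ b.1.val} :=
          card_le_card (monotone_filter_right _ fun _ _ h => h)
      _ ≤ _ := (card_slot_vertex_le _).trans (Nat.mul_le_mul_right k (card_slot_meet_le T))
  have hstep (b : HyperSlot n k × Fin n) : #{b' | WalkStep b b'} ≤ n ^ (k - 1) * k :=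
    calc #{b' | WalkStep b b'}
        ≤ #{b' : HyperSlot n k × Fin n | b.2 ∈ b'.1.val ∧ b'.2 ∈ b'.1.val} :=
          card_le_card (monotone_filter_right _ fun _ _ h => h)
      _ ≤ _ := (card_slot_vertex_le _).trans (Nat.mul_le_mul_right k (card_slot_mem_le b.2))
  calc _ ≤ #T * n ^ (k - 1) * k * (n ^ (k - 1) * k) ^ l := card_isChainFrom_le _ _ hstart hstep l
    _ = #T * (n ^ (k - 1) * k) ^ (l + 1) := by ring

lemma card_walkCerts_le (T : Finset (Fin n)) (l : ℕ) :
    #(walkCerts (k := k) T l) ≤ #T * (n ^ (k - 1) * k) ^ (l + 1) :=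
  (card_le_card (monotone_filter_right _ fun _ _ hc => hc.1)).trans
    (card_isChainFrom_walkStep_le T l)

lemma card_cycleCerts_le (T : Finset (Fin n)) (l : ℕ) (j : Fin (l + 1)) :
    #(cycleCerts (k := k) T l j) ≤ #T * (n ^ (k - 1) * k) ^ (l + 1) * (k * n ^ (k - 2)) := by
  refine (card_le_of_init _ (IsChainFrom (StartsIn T) WalkStep)
    (fun p x => WalkStep (p (Fin.last l)) x ∧ x.2 ≠ (p (Fin.last l)).2 ∧ x.2 ∈ (p j).1.val)
    (fun p => ?_) fun c hc => ?_).trans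
    (Nat.mul_le_mul_right _ (card_isChainFrom_walkStep_le T l))
  · calc #{x | WalkStep (p (Fin.last l)) x ∧ x.2 ≠ (p (Fin.last l)).2 ∧ x.2 ∈ (p j).1.val}
        ≤ #{x : HyperSlot n k × Fin n | ((p (Fin.last l)).2 ∈ x.1.val ∧ x.2 ∈ x.1.val) ∧
            x.2 ≠ (p (Fin.last l)).2 ∧ x.2 ∈ (p j).1.val} :=
          card_le_card (monotone_filter_right _ fun _ _ h => h)
      _ ≤ #(p j).1.val * n ^ (k - 2) := card_slot_vertex_closing_le _ _
      _ = k * n ^ (k - 2) := by rw [(p j).1.2]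
  · simp only [cycleCerts, walkCerts, mem_filter, mem_univ, true_and] at hc
    exact ⟨hc.1.1.init.1, hc.1.1.init.2, hc.2⟩

end Certificates

section Events

variable {n k : ℕ}

lemma mem_edges_hyperOf {f : HyperSlot n k → Bool} {e : Multiset (Fin n)} :
    e ∈ (hyperOf n k f).edges ↔ ∃ s : HyperSlot n k, f s = true ∧ s.val.val = e := by
  simp [hyperOf]

lemma exists_mem_walkCerts_of_isWalk {f : HyperSlot n k → Bool} {T : Finset (Fin n)} {l : ℕ}
    {u : ℕ → Fin n} {g : ℕ → Multiset (Fin n)}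
    (hw : IsWalk (EdgeInc (hyperOf n k f).edges) T (l + 1) u g)
    (hg : Set.InjOn g (Set.Iio (l + 1))) :
    ∃ c ∈ walkCerts T l, (∀ s ∈ slotsOf c, f s = true) ∧
      ∀ i : Fin (l + 1), (c i).2 = u (i + 1) ∧ ∀ x, x ∈ (c i).1.val ↔ x ∈ g i := by
  choose σ hσf hσg using fun i : Fin (l + 1) => mem_edges_hyperOf.1 (hw.2 i i.2).1.1
  have hmem (i : Fin (l + 1)) (x : Fin n) : x ∈ (σ i).val ↔ x ∈ g i := by
    rw [← hσg i]; rfl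
  refine ⟨fun i => (σ i, u (i + 1)), ?_, fun s hs => ?_, fun i => ⟨rfl, hmem i⟩⟩
  · simp only [walkCerts, mem_filter, mem_univ, true_and]
    refine ⟨⟨⟨⟨u 0, hw.1, (hmem 0 _).2 (hw.2 0 l.succ_pos).1.2⟩,
      (hmem 0 _).2 (hw.2 0 l.succ_pos).2.2⟩, fun i => ?_⟩, fun i i' h => ?_⟩
    · have := hw.2 (i + 1) (by omega)
      exact ⟨(hmem _ _).2 (by simpa using this.1.2), (hmem _ _).2 (by simpa using this.2.2)⟩
    · have := hσg i ▸ hσg i' ▸ congrArg (fun s : HyperSlot n k => s.val.val) h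
      exact Fin.ext (hg i.2 i'.2 this)
  · obtain ⟨i, -, rfl⟩ := mem_image.1 hs
    exact hσf i

def ball (f : HyperSlot n k → Bool) (T : Finset (Fin n)) (r : ℕ) : Finset (Fin n) :=
  {v | distLE (hyperOf n k f).edges T r v}

/-- Every vertex of the ball outside `T` ends a shortest walk from `T`, whose steps form a present
walk certificate. -/
lemma card_ball_sdiff_le (f : HyperSlot n k → Bool) (T : Finset (Fin n)) (r : ℕ) :
    #(ball f T r \ T) ≤
      ∑ l ∈ range r, #{c ∈ walkCerts (k := k) T l | ∀ s ∈ slotsOf c, f s = true} := by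
  calc #(ball f T r \ T)
      ≤ #((range r).biUnion fun l =>
          ({c ∈ walkCerts T l | ∀ s ∈ slotsOf c, f s = true}).image
            fun c => (c (Fin.last l)).2) := by
        refine card_le_card fun v hv => ?_
        obtain ⟨hv, hvT⟩ := mem_sdiff.1 hv
        obtain ⟨j, hjr, u, g, hw, hu⟩ := exists_isWalk_of_distLE (mem_filter.1 hv).2
        obtain ⟨j, hjr, u, g, hw, rfl, -, hg⟩ :=
          exists_isWalk_shortest (C := {v}) ⟨j, hjr, u, g, hw, hu⟩
        obtain ⟨l, rfl⟩ : ∃ l, j = l + 1 :=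
          Nat.exists_eq_succ_of_ne_zero fun hj => hvT (hj ▸ hw.1)
        obtain ⟨c, hc, hpres, hcu⟩ := exists_mem_walkCerts_of_isWalk hw hg
        refine mem_biUnion.2 ⟨l, mem_range.2 hjr, mem_image.2 ⟨c, mem_filter.2 ⟨hc, hpres⟩, ?_⟩⟩
        simpa using (hcu (Fin.last l)).1
    _ ≤ ∑ l ∈ range r, #{c ∈ walkCerts (k := k) T l | ∀ s ∈ slotsOf c, f s = true} :=
        card_biUnion_le.trans (sum_le_sum fun l _ => card_image_le)

lemma exists_mem_cycleCerts {f : HyperSlot n k → Bool} {T : Finset (Fin n)} {r L m : ℕ}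
    {v : Fin (m + 1) → Fin n} {e : Fin m → Multiset (Fin n)}
    (hcyc : (hyperOf n k f).IsCycle m v e)
    (hball : ∀ i, ∀ x ∈ e i, distLE (hyperOf n k f).edges T r x) (hL : #(ball f T r) ≤ L) :
    ∃ l ∈ range (r + L), ∃ j ∈ (univ : Finset (Fin (l + 1))), ∃ c ∈ cycleCerts T l j,
      ∀ s ∈ slotsOf c, f s = true := by
  obtain ⟨m, rfl⟩ : ∃ m', m = m' + 2 := ⟨m - 2, by have := hcyc.1; omega⟩
  have ⟨_, hmem, he, hv, _, hinc⟩ := hcyc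
  have hmL : m + 2 ≤ L :=
    calc m + 2 = #(univ : Finset (Fin (m + 2))) := by simp
      _ ≤ #(ball f T r) :=
        card_le_card_of_injOn (fun i => v i.castSucc)
          (fun i _ => by simpa [ball] using hball i _ (hinc i).1) fun i _ i' _ h => hv i i' h
      _ ≤ L := hL
  obtain ⟨j, hjr, u, g, hw, hg, hne, hclose⟩ :=
    exists_isWalk_around_cycle (inc := EdgeInc (hyperOf n k f).edges)
      (x := fun i => v i.castSucc) (fun i i' h => hv i i' h) he
      (fun i => ⟨⟨hmem i, (hinc i).1⟩, hmem i, hcyc.mem_succ i⟩)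
      (exists_isWalk_of_distLE (hball 0 _ (hinc 0).1))
  obtain ⟨c, hc, hpres, hcu⟩ := exists_mem_walkCerts_of_isWalk (l := j + m + 1) hw hg
  refine ⟨j + m, mem_range.2 (by omega), ⟨j, by omega⟩, mem_univ _, c, ?_, hpres⟩
  simp only [cycleCerts, mem_filter, mem_univ, true_and]
  refine ⟨hc, ?_, ?_⟩
  · rw [(hcu _).1, (hcu _).1]
    simpa using hne
  · rw [(hcu _).1, (hcu _).2]
    simpa using hclose.2

end Events

section Probability

variable {n k : ℕ} {q : ℝ}

lemma expect_ind_exists_slot_meeting_twice_le (hq0 : 0 ≤ q) (hq1 : q ≤ 1) (T : Finset (Fin n)) :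
    expect q (fun f : HyperSlot n k → Bool => ind (¬ ∀ s, f s = true → #(s.val ∩ T) ≤ 1)) ≤
      #T ^ 2 * n ^ (k - 2) * q := by
  set S : Finset (HyperSlot n k) := {s | ∃ x ∈ T, ∃ y ∈ T, x ≠ y ∧ x ∈ s.val ∧ y ∈ s.val}
  calc _ ≤ expect q (fun f => ind (∃ s ∈ S, ∀ a ∈ ({s} : Finset _), f a = true)) := by
        refine expect_mono hq0 hq1 fun f => ind_mono fun h => ?_
        obtain ⟨s, hfs, hcard⟩ := not_forall₂.1 h
        obtain ⟨x, hx, y, hy, hxy⟩ := one_lt_card.1 (not_le.1 hcard)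
        rw [mem_inter] at hx hy
        exact ⟨s, mem_filter.2 ⟨mem_univ _, x, hx.2, y, hy.2, hxy, hx.1, hy.1⟩, by simpa using hfs⟩
    _ ≤ ∑ s ∈ S, q ^ #({s} : Finset _) := expect_ind_exists_le hq0 hq1 _ _
    _ = #S * q := by simp
    _ ≤ #T ^ 2 * n ^ (k - 2) * q := by
        gcongr
        exact_mod_cast card_slot_two_le T

lemma mul_ind_not_card_le_le_card_sdiff {α : Type*} [DecidableEq α] (B T : Finset α) (L : ℕ) :
    ((L : ℝ) + 1 - #T) * ind (¬ #B ≤ L) ≤ #(B \ T) := by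
  by_cases h : #B ≤ L
  · rw [ind_of_not (not_not_intro h), mul_zero]
    positivity
  · rw [ind_of h, mul_one]
    have : (L : ℝ) + 1 ≤ #B := by exact_mod_cast not_le.1 h
    have : (#B : ℝ) ≤ #(B \ T) + #T := by exact_mod_cast card_le_card_sdiff_add_card
    linarith

lemma mul_expect_ind_not_card_ball_le (hq0 : 0 ≤ q) (hq1 : q ≤ 1) (T : Finset (Fin n))
    (r L : ℕ) :
    ((L : ℝ) + 1 - #T) * expect q (fun f : HyperSlot n k → Bool => ind (¬ #(ball f T r) ≤ L)) ≤
      ∑ l ∈ range r, (#T * (n ^ (k - 1) * k) ^ (l + 1) : ℕ) * q ^ (l + 1) := by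
  rw [← expect_const_mul]
  calc _ ≤ expect q (fun f => ∑ l ∈ range r,
          (#{c ∈ walkCerts (k := k) T l | ∀ s ∈ slotsOf c, f s = true} : ℝ)) :=
        expect_mono hq0 hq1 fun f => (mul_ind_not_card_le_le_card_sdiff _ _ L).trans
          (by exact_mod_cast card_ball_sdiff_le f T r)
    _ = ∑ l ∈ range r, (#(walkCerts (k := k) T l) : ℝ) * q ^ (l + 1) := by
        rw [expect_sum]
        refine sum_congr rfl fun l _ => ?_
        rw [expect_card_filter_forall, sum_congr rfl fun c hc => by
          rw [card_slotsOf (mem_filter.1 hc).2.2], sum_const, nsmul_eq_mul]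
    _ ≤ _ := sum_le_sum fun l _ => by gcongr; exact_mod_cast card_walkCerts_le T l

lemma expect_ind_cycle_le (hq0 : 0 ≤ q) (hq1 : q ≤ 1) (T : Finset (Fin n)) (r L : ℕ) :
    expect q (fun f : HyperSlot n k → Bool =>
      ind ((∃ (m : ℕ) (v : Fin (m + 1) → Fin n) (e : Fin m → Multiset (Fin n)),
        (hyperOf n k f).IsCycle m v e ∧
          ∀ i, ∀ u ∈ e i, distLE (hyperOf n k f).edges T r u) ∧ #(ball f T r) ≤ L)) ≤
      ∑ l ∈ range (r + L),
        ((l + 1) * (#T * (n ^ (k - 1) * k) ^ (l + 1) * (k * n ^ (k - 2))) : ℕ) * q ^ (l + 2) := by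
  calc _ ≤ expect q (fun f => ∑ l ∈ range (r + L), ∑ j ∈ (univ : Finset (Fin (l + 1))),
          ind (∃ c ∈ cycleCerts (k := k) T l j, ∀ s ∈ slotsOf c, f s = true)) := by
        refine expect_mono hq0 hq1 fun f => ?_
        refine (ind_mono fun h => ?_).trans ((ind_exists_le_sum _ _).trans
          (sum_le_sum fun l _ => ind_exists_le_sum _ _))
        obtain ⟨⟨m, v, e, hcyc, hball⟩, hL⟩ := h
        exact exists_mem_cycleCerts hcyc hball hL
    _ = ∑ l ∈ range (r + L), ∑ j : Fin (l + 1),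
          expect q (fun f =>
            ind (∃ c ∈ cycleCerts (k := k) T l j, ∀ s ∈ slotsOf c, f s = true)) := by
        simp only [expect_sum]
    _ ≤ ∑ l ∈ range (r + L), ∑ j : Fin (l + 1),
          (#(cycleCerts (k := k) T l j) : ℝ) * q ^ (l + 2) := by
        refine sum_le_sum fun l _ => sum_le_sum fun j _ => ?_
        refine (expect_ind_exists_le hq0 hq1 _ _).trans_eq ?_
        rw [sum_congr rfl fun c hc => by
          rw [card_slotsOf (mem_filter.1 (mem_filter.1 hc).2.1).2.2], sum_const, nsmul_eq_mul]
    _ ≤ _ := by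
        refine sum_le_sum fun l _ => ?_
        calc (∑ j : Fin (l + 1), (#(cycleCerts (k := k) T l j) : ℝ) * q ^ (l + 2))
            ≤ ∑ _j : Fin (l + 1),
                ((#T * (n ^ (k - 1) * k) ^ (l + 1) * (k * n ^ (k - 2)) : ℕ) : ℝ) * q ^ (l + 2) := by
              gcongr with j
              exact_mod_cast card_cycleCerts_le T l j
          _ = _ := by simp; ring

end Probability

section Bounds

variable {n k : ℕ} {q : ℝ}

lemma ind_not_localGood_le (t r L : ℕ) (f : HyperSlot n k → Bool)
    (T : {T : Finset (Fin n) // #T = t}) :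
    ind (¬ LocalGood k t n r L f T) ≤
      ind (¬ ∀ s, f s = true → #(s.val ∩ T.val) ≤ 1) +
      ind ((∃ (m : ℕ) (v : Fin (m + 1) → Fin n) (e : Fin m → Multiset (Fin n)),
        (hyperOf n k f).IsCycle m v e ∧
          ∀ i, ∀ u ∈ e i, distLE (hyperOf n k f).edges T.val r u) ∧ #(ball f T.val r) ≤ L) +
      ind (¬ #(ball f T.val r) ≤ L) := by
  rw [add_assoc]
  refine (ind_mono fun h => ?_).trans ((ind_or_le _ _).trans (add_le_add le_rfl (ind_or_le _ _)))
  unfold LocalGood at h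
  by_cases hball : #(ball f T.val r) ≤ L
  · exact (not_and_or.1 h).imp_right fun h' => Or.inl ⟨not_not.1 fun h'' => h' ⟨h'', hball⟩, hball⟩
  · exact Or.inr (Or.inr hball)

lemma natCast_mul_pow_sub_two_mul (hk : 2 ≤ k) (hn : 1 ≤ n) :
    (k : ℝ) * n ^ (k - 2) * q = n ^ (k - 1) * k * q / n := by
  have hpow : (n : ℝ) ^ (k - 2) * n = n ^ (k - 1) := by
    rw [← pow_succ]; congr 1; omega
  rw [eq_div_iff (by positivity), ← hpow]
  ring

variable {D : ℝ}

lemma pow_sub_two_mul_le (hk : 2 ≤ k) (hn : 1 ≤ n) (hq0 : 0 ≤ q)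
    (hqD : (n : ℝ) ^ (k - 1) * k * q ≤ D) : (n : ℝ) ^ (k - 2) * q ≤ D / n :=
  calc (n : ℝ) ^ (k - 2) * q ≤ k * n ^ (k - 2) * q := by
        have : (1 : ℝ) ≤ k := by exact_mod_cast (by omega : 1 ≤ k)
        rw [mul_assoc]; exact le_mul_of_one_le_left (by positivity) this
    _ ≤ D / n := by
        rw [natCast_mul_pow_sub_two_mul hk hn]; gcongr

lemma sum_walk_bound_le (hq0 : 0 ≤ q) (hD : 1 ≤ D) (hqD : (n : ℝ) ^ (k - 1) * k * q ≤ D)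
    (t r : ℕ) :
    ∑ l ∈ range r, ((t * (n ^ (k - 1) * k) ^ (l + 1) : ℕ) : ℝ) * q ^ (l + 1) ≤ r * t * D ^ r :=
  calc _ ≤ ∑ _l ∈ range r, (t : ℝ) * D ^ r := by
        refine sum_le_sum fun l hl => ?_
        calc _ = (t : ℝ) * ((n : ℝ) ^ (k - 1) * k * q) ^ (l + 1) := by push_cast; ring
          _ ≤ t * D ^ r := by
              gcongr
              exact (pow_le_pow_left₀ (by positivity) hqD _).trans
                (pow_le_pow_right₀ hD (by have := mem_range.1 hl; omega))
    _ = _ := by rw [sum_const, card_range, nsmul_eq_mul]; ring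

lemma sum_cycle_bound_le (hk : 2 ≤ k) (hn : 1 ≤ n) (hq0 : 0 ≤ q) (hD : 1 ≤ D)
    (hqD : (n : ℝ) ^ (k - 1) * k * q ≤ D) (t r L : ℕ) :
    ∑ l ∈ range (r + L),
      (((l + 1) * (t * (n ^ (k - 1) * k) ^ (l + 1) * (k * n ^ (k - 2))) : ℕ) : ℝ) * q ^ (l + 2) ≤
        (r + L) ^ 2 * t * D ^ (r + L + 1) / n :=
  calc _ ≤ ∑ _l ∈ range (r + L), ((r : ℝ) + L) * t * D ^ (r + L + 1) / n := by
        refine sum_le_sum fun l hl => ?_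
        have hl := mem_range.1 hl
        have hl1 : (l : ℝ) + 1 ≤ r + L := by exact_mod_cast hl
        have hpow : ((n : ℝ) ^ (k - 1) * k * q) ^ (l + 2) ≤ D ^ (r + L + 1) :=
          (pow_le_pow_left₀ (by positivity) hqD _).trans (pow_le_pow_right₀ hD (by omega))
        calc _ = ((l : ℝ) + 1) * t * ((n : ℝ) ^ (k - 1) * k * q) ^ (l + 1) *
              ((k : ℝ) * n ^ (k - 2) * q) := by push_cast; ring
          _ = ((l : ℝ) + 1) * t * ((n : ℝ) ^ (k - 1) * k * q) ^ (l + 2) / n := by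
              rw [natCast_mul_pow_sub_two_mul hk hn]; ring
          _ ≤ ((r : ℝ) + L) * t * D ^ (r + L + 1) / n := by
              gcongr ?_ / _
              exact mul_le_mul (by gcongr) hpow (by positivity) (by positivity)
    _ = _ := by rw [sum_const, card_range, nsmul_eq_mul]; push_cast; ring

/-- `n ^ (k - 1) * k * q ≤ D` bounds the expected number of ways for a walk to take one more
step. -/
lemma expect_ind_not_localGood_le {t r L : ℕ} (hk : 2 ≤ k) (hn : 1 ≤ n) (hq0 : 0 ≤ q)
    (hq1 : q ≤ 1) (hD : 1 ≤ D) (hqD : (n : ℝ) ^ (k - 1) * k * q ≤ D) (htL : t ≤ L)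
    (T : {T : Finset (Fin n) // #T = t}) :
    expect q (fun f : HyperSlot n k → Bool => ind (¬ LocalGood k t n r L f T)) ≤
      (t ^ 2 * D + (r + L) ^ 2 * t * D ^ (r + L + 1)) / n + r * t * D ^ r / (L + 1 - t) := by
  obtain ⟨T, rfl⟩ := T
  have hball : expect q (fun f : HyperSlot n k → Bool => ind (¬ #(ball f T r) ≤ L)) ≤
      r * #T * D ^ r / (L + 1 - #T) := by
    have : (#T : ℝ) ≤ L := by exact_mod_cast htL
    rw [le_div_iff₀ (by linarith), mul_comm]
    exact (mul_expect_ind_not_card_ball_le hq0 hq1 T r L).trans (sum_walk_bound_le hq0 hD hqD _ r)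
  calc _ ≤ _ := expect_mono hq0 hq1 (ind_not_localGood_le #T r L · ⟨T, rfl⟩)
    _ = _ := by rw [expect_add, expect_add]
    _ ≤ #T ^ 2 * (D / n) + (r + L) ^ 2 * #T * D ^ (r + L + 1) / n +
          r * #T * D ^ r / (L + 1 - #T) := by
        gcongr
        · refine (expect_ind_exists_slot_meeting_twice_le hq0 hq1 T).trans ?_
          rw [mul_assoc]
          gcongr
          exact pow_sub_two_mul_le hk hn hq0 hqD
        · exact (expect_ind_cycle_le hq0 hq1 T r L).trans
            (sum_cycle_bound_le hk hn hq0 hD hqD _ r L)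
    _ = _ := by ring

end Bounds

lemma localProb_eq (k t n : ℕ) (p : ℝ) (r L : ℕ) :
    localProb k t n p r L = ∑ T : {T : Finset (Fin n) // #T = t},
      (n.choose t : ℝ)⁻¹ * expect (clamp01 p) (fun f => ind (LocalGood k t n r L f T)) := by
  simp only [localProb, expect, mul_sum]
  rw [sum_comm]
  congr 1
  ext T
  refine sum_congr (by ext; simp) fun f _ => ?_
  simp only [ind, bernoulliWeight]
  ring

lemma le_localProb {k t n r L : ℕ} {p b : ℝ} (htn : t ≤ n)
    (h : ∀ T : {T : Finset (Fin n) // #T = t},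
      b ≤ expect (clamp01 p) (fun f => ind (LocalGood k t n r L f T))) :
    b ≤ localProb k t n p r L := by
  have hchoose : (n.choose t : ℝ) ≠ 0 := by exact_mod_cast (Nat.choose_pos htn).ne'
  calc b = ∑ _T : {T : Finset (Fin n) // #T = t}, (n.choose t : ℝ)⁻¹ * b := by
        rw [sum_const, card_univ, Fintype.card_finset_len, Fintype.card_fin, nsmul_eq_mul,
          ← mul_assoc, mul_inv_cancel₀ hchoose, one_mul]
    _ ≤ localProb k t n p r L := by
        rw [localProb_eq]
        exact sum_le_sum fun T _ => mul_le_mul_of_nonneg_left (h T) (by positivity)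

lemma pow_mul_clamp01_le {n k : ℕ} {p c : ℝ} (hn : 1 ≤ n) (hp : p ≤ c / (n : ℝ) ^ (k - 1)) :
    (n : ℝ) ^ (k - 1) * k * clamp01 p ≤ max 1 (k * c) := by
  have hpos : (0 : ℝ) < (n : ℝ) ^ (k - 1) := by positivity
  rcases le_total (min 1 p) 0 with h | h
  · simp [clamp01, max_eq_left h]
  · calc (n : ℝ) ^ (k - 1) * k * clamp01 p ≤ (n : ℝ) ^ (k - 1) * k * (c / (n : ℝ) ^ (k - 1)) := by
          rw [clamp01, max_eq_right h]
          gcongr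
          exact (min_le_right _ _).trans hp
      _ = k * c := by field_simp
      _ ≤ max 1 (k * c) := le_max_right _ _

lemma div_le_half_of_le {X y ε : ℝ} (hε : 0 < ε) (hy : 0 < y) (h : 2 * X / ε ≤ y) :
    X / y ≤ ε / 2 := by
  rw [div_le_iff₀ hε] at h
  rw [div_le_iff₀ hy]
  linarith

end RandomHypergraph

open RandomHypergraph

theorem stmt9_general (k t : ℕ) (hk : 2 ≤ k) (c ε : ℝ)
    (hε : 0 < ε) (p : ℕ → ℝ)
    (hp : ∀ n : ℕ, 1 ≤ n → p n ≤ c / (n : ℝ) ^ (k - 1)) :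
    ∀ r : ℕ, 0 < r → ∃ L N : ℕ, ∀ n : ℕ, N ≤ n →
      1 - ε ≤ localProb k t n (p n) r L := by
  intro r _
  set D := max 1 ((k : ℝ) * c)
  set M : ℝ := r * t * D ^ r
  set L := t + ⌈2 * M / ε⌉₊
  set K : ℝ := t ^ 2 * D + (r + L) ^ 2 * t * D ^ (r + L + 1)
  refine ⟨L, max t ⌈2 * K / ε⌉₊ + 1, fun n hn => le_localProb (by omega) fun T => ?_⟩
  have hn1 : 1 ≤ n := by omega
  have hq0 : 0 ≤ clamp01 (p n) := le_max_left _ _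
  have hq1 : clamp01 (p n) ≤ 1 := max_le zero_le_one (min_le_left _ _)
  have hbad : expect (clamp01 (p n)) (fun f => ind (¬ LocalGood k t n r L f T)) ≤
      K / n + M / (L + 1 - t) :=
    expect_ind_not_localGood_le hk hn1 hq0 hq1 (le_max_left _ _)
      (pow_mul_clamp01_le hn1 (hp n hn1)) (Nat.le_add_right t _) T
  have hK : K / n ≤ ε / 2 := div_le_half_of_le hε (by positivity)
    ((Nat.le_ceil _).trans (by exact_mod_cast (by omega : ⌈2 * K / ε⌉₊ ≤ n)))
  have hM : M / (L + 1 - t) ≤ ε / 2 := by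
    refine div_le_half_of_le hε ?_ ?_ <;>
      simp only [L, Nat.cast_add, add_sub_cancel_left, add_sub_right_comm]
    · positivity
    · linarith [Nat.le_ceil (2 * M / ε)]
  rw [expect_ind_not] at hbad
  linarith

/-- The local structure lemma: for `k ≥ 2`, `t ≥ 1`, constants `c, ε > 0` and
`p = p(n) ≤ c·n^(1-k)`, for every radius `r > 0` there is an `L` such that
for all sufficiently large `n`, with probability at least `1 - ε` the local
structure around a random `t`-set `T` in `G^k(n, p(n))` is good. -/
theorem stmt9 (k t : ℕ) (hk : 2 ≤ k) (ht : 1 ≤ t) (c ε : ℝ)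
    (hc : 0 < c) (hε : 0 < ε) (p : ℕ → ℝ)
    (hp : ∀ n : ℕ, 1 ≤ n → p n ≤ c / (n : ℝ) ^ (k - 1)) :
    ∀ r : ℕ, 0 < r → ∃ L N : ℕ, ∀ n : ℕ, N ≤ n →
      1 - ε ≤ localProb k t n (p n) r L :=
  stmt9_general k t hk c ε hε p hp

end
end

section
/- Every finite simple graph, each of whose connected components is a tree or is unicyclic, admits a proper coloring of its vertices with 3 colors such that every cycle of the graph contains vertices of at least 3 different colors (in particular, its acyclic chromatic number is at most 3). -/
/-!
In every component that contains a cycle pick one vertex lying on a cycle, and let `S` be the set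
of picked vertices. Since all cycles of a unicyclic component have the same edge set, every cycle
passes through the vertex of `S` in its component. Hence `G` minus the vertices of `S` is a forest;
2-colour it and give `S` the third colour. This is proper because `S` is independent, and a cycle
through `s ∈ S` sees the third colour at `s` and two different colours at the next two vertices.
-/

open SimpleGraph

namespace SimpleGraph

variable {V : Type*} {G : SimpleGraph V}

lemma Walk.start_mem_support_of_edges_subset {u v w x : V} {p : G.Walk u v} {q : G.Walk w x}
    (hq : ¬q.Nil) (h : q.edges ⊆ p.edges) : w ∈ p.support :=
  p.fst_mem_support_of_mem_edges (h (q.mk_start_snd_mem_edges hq))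

lemma Walk.IsCycle.exists_adj_adj {u : V} {c : G.Walk u u} (hc : c.IsCycle) :
    ∃ v w, G.Adj u v ∧ G.Adj v w ∧ w ≠ u ∧ v ∈ c.support ∧ w ∈ c.support := by
  have hlen := hc.three_le_length
  refine ⟨c.getVert 1, c.getVert 2, by simpa using c.adj_getVert_succ (i := 0) (by omega),
    c.adj_getVert_succ (by omega), ?_, c.getVert_mem_support 1, c.getVert_mem_support 2⟩
  simpa using (hc.getVert_sub_one_ne_getVert_add_one (i := 1) (by omega)).symm

lemma exists_cycle_transversal (G : SimpleGraph V) :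
    ∃ S : Set V, (∀ s ∈ S, ∀ t ∈ S, G.Reachable s t → s = t) ∧
      ∀ a (c : G.Walk a a), c.IsCycle →
        ∃ s ∈ S, G.Reachable a s ∧ ∃ c' : G.Walk s s, c'.IsCycle := by
  obtain ⟨_, _⟩ := exists_wellFoundedLT V
  let OnCycle (v : V) : Prop := ∃ c : G.Walk v v, c.IsCycle
  refine ⟨{v | OnCycle v ∧ ∀ w, OnCycle w → G.Reachable v w → v ≤ w}, ?_,
    fun a c hc => ?_⟩
  · exact fun s hs t ht hst => le_antisymm (hs.2 t ht.1 hst) (ht.2 s hs.1 hst.symm)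
  · obtain ⟨s, ⟨hs, has⟩, hmin⟩ :=
      wellFounded_lt.has_min {w | OnCycle w ∧ G.Reachable a w} ⟨a, ⟨c, hc⟩, .refl a⟩
    exact ⟨s, ⟨hs, fun w hw hsw => not_lt.1 (hmin w ⟨hw, has.trans hsw⟩)⟩, has, hs⟩

variable (S : Set V)

lemma isAcyclic_spanningCoe_induce_compl
    (hcyc : ∀ a (c : G.Walk a a), c.IsCycle → ∃ s ∈ S, s ∈ c.support) :
    (G.induce Sᶜ).spanningCoe.IsAcyclic := by
  classical
  intro a c hc
  have hle : (G.induce Sᶜ).spanningCoe ≤ G := spanningCoe_induce_le G Sᶜ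
  obtain ⟨s, hsS, hs⟩ := hcyc a (c.mapLe hle) (hc.mapLe hle)
  rw [Walk.support_mapLe_eq_support] at hs
  obtain ⟨v, -, hsv, -⟩ := (hc.rotate hs).exists_adj_adj
  have hsv' : G.Adj s v ∧ s ∉ S ∧ v ∉ S := by simpa using hsv
  exact hsv'.2.1 hsS

theorem exists_acyclic_three_coloring_of_cycle_transversal
    (hS : ∀ s ∈ S, ∀ t ∈ S, G.Reachable s t → s = t)
    (hcyc : ∀ a (c : G.Walk a a), c.IsCycle → ∃ s ∈ S, s ∈ c.support) :
    ∃ col : V → Fin 3, (∀ a b, G.Adj a b → col a ≠ col b) ∧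
      ∀ a (c : G.Walk a a), c.IsCycle → 3 ≤ (c.support.map col).toFinset.card := by
  classical
  let col₂ := (isAcyclic_spanningCoe_induce_compl S hcyc).coloringTwo
  let col (v : V) : Fin 3 := if v ∈ S then Fin.last 2 else (col₂ v).castSucc
  have col_of_mem {v : V} (hv : v ∈ S) : col v = Fin.last 2 := if_pos hv
  have col_ne_last {v : V} (hv : v ∉ S) : col v ≠ Fin.last 2 := by
    simp only [col, if_neg hv]
    exact (Fin.castSucc_lt_last _).ne
  have not_mem_of_adj {u v : V} (huv : G.Adj u v) (hu : u ∈ S) : v ∉ S := fun hv =>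
    huv.ne (hS u hu v hv huv.reachable)
  have col_ne_of_adj {u v : V} (huv : G.Adj u v) (hu : u ∉ S) (hv : v ∉ S) :
      col u ≠ col v := by
    have := col₂.valid (G := (G.induce Sᶜ).spanningCoe) (by simpa using ⟨huv, hu, hv⟩)
    simpa [col, hu, hv] using this
  refine ⟨col, fun u v huv => ?_, fun a c hc => ?_⟩
  · by_cases hu : u ∈ S
    · rw [col_of_mem hu]
      exact (col_ne_last (not_mem_of_adj huv hu)).symm
    · by_cases hv : v ∈ S
      · rw [col_of_mem hv]
        exact col_ne_last hu
      · exact col_ne_of_adj huv hu hv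
  · obtain ⟨s, hsS, hs⟩ := hcyc a c hc
    obtain ⟨v, w, hsv, hvw, hws, hv, hw⟩ := (hc.rotate hs).exists_adj_adj
    have hvS := not_mem_of_adj hsv hsS
    have hwS : w ∉ S := fun hw => hws (hS w hw s hsS (hsv.reachable.trans hvw.reachable).symm)
    rw [Walk.mem_support_rotate_iff] at hv hw
    have hcard : ({col s, col v, col w} : Finset (Fin 3)).card = 3 := by
      rw [col_of_mem hsS]
      exact Finset.card_eq_three.2 ⟨_, _, _, (col_ne_last hvS).symm, (col_ne_last hwS).symm,
        col_ne_of_adj hvw hvS hwS, rfl⟩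
    calc 3 = ({col s, col v, col w} : Finset (Fin 3)).card := hcard.symm
      _ ≤ _ := Finset.card_le_card <| by
        simp only [Finset.insert_subset_iff, Finset.singleton_subset_iff, List.mem_toFinset]
        exact ⟨List.mem_map_of_mem hs, List.mem_map_of_mem hv, List.mem_map_of_mem hw⟩

end SimpleGraph

theorem stmt12_general {V : Type} (G : SimpleGraph V)
    (hcomp : ∀ (a b : V) (c : G.Walk a a) (c' : G.Walk b b),
      c.IsCycle → c'.IsCycle → G.Reachable a b → ∀ e, e ∈ c.edges ↔ e ∈ c'.edges) :
    ∃ col : V → Fin 3,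
      (∀ a b : V, G.Adj a b → col a ≠ col b) ∧
      (∀ (a : V) (c : G.Walk a a), c.IsCycle →
        3 ≤ (c.support.map col).toFinset.card) := by
  obtain ⟨S, hS, hcover⟩ := exists_cycle_transversal G
  refine exists_acyclic_three_coloring_of_cycle_transversal S hS fun a c hc => ?_
  obtain ⟨s, hsS, has, c', hc'⟩ := hcover a c hc
  exact ⟨s, hsS, Walk.start_mem_support_of_edges_subset hc'.not_nil
    fun e he => (hcomp a s c c' hc hc' has e).2 he⟩

/-- Every finite simple graph, each of whose connected components is a tree or
unicyclic (i.e. any two cycles lying in the same component coincide, where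
cycles are identified by their edge sets), admits a proper 3-coloring in which
every cycle receives at least 3 different colors.  In particular its acyclic
chromatic number is at most 3. -/
theorem stmt12 {V : Type} [Fintype V] (G : SimpleGraph V)
    (hcomp : ∀ (a b : V) (c : G.Walk a a) (c' : G.Walk b b),
      c.IsCycle → c'.IsCycle → G.Reachable a b → ∀ e, e ∈ c.edges ↔ e ∈ c'.edges) :
    ∃ col : V → Fin 3,
      (∀ a b : V, G.Adj a b → col a ≠ col b) ∧
      (∀ (a : V) (c : G.Walk a a), c.IsCycle →
        3 ≤ (c.support.map col).toFinset.card) :=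
  stmt12_general G hcomp
end
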